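/- arXiv:2006.11027 — 2 statements merged into one kernel-verified Lean document; each statement's English description precedes it below -/
import Mathlib

section
/- For every z > 0: g_z(w) ≤ 3/(2(1 − w)³) for all w < 0, and g_z(w) ≤ 3/(1 + w)³ for all w > z. -/
noncomputable section

/-- The standard normal cumulative distribution function
`Φ(w) = ∫_{-∞}^w (1/√(2π)) e^{-t²/2} dt`. -/
def Phi (w : ℝ) : ℝ :=
  ∫ t in Set.Iic w, (1 / Real.sqrt (2 * Real.pi)) * Real.exp (-t ^ 2 / 2)

/-- The function `g_z = (w f_z(w))'` where `f_z` is the bounded solution of the Stein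
equation for the indicator of `(-∞, z]`. -/
def gz (z w : ℝ) : ℝ :=
  if z < w then
    (Real.sqrt (2 * Real.pi) * (1 + w ^ 2) * Real.exp (w ^ 2 / 2) * (1 - Phi w) - w) * Phi z
  else
    (Real.sqrt (2 * Real.pi) * (1 + w ^ 2) * Real.exp (w ^ 2 / 2) * Phi w + w) * (1 - Phi z)

/-!
Write `φ = Φ'` for the standard normal density and `h(x) = (1 + x²)(1 - Φ x)/φ x - x`.
By `Φ(-w) = 1 - Φ(w)` both branches of `g_z` are multiples of `h`: `g_z(w) = Φ(z) h(w)` for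
`w > z` and `g_z(w) = (1 - Φ(z)) h(-w)` for `w ≤ z`, and for `z > 0` these factors are at most
`1` and `1/2`. So it suffices that `0 ≤ h(x) ≤ 3/(1 + x)³` for `x ≥ 0`, i.e. the Mills-ratio
bounds `x/(1 + x²) φ(x) ≤ 1 - Φ(x) ≤ (x + 3/(1 + x)³)/(1 + x²) φ(x)`.

Both come from one comparison principle: `u = 1 - Φ - rφ` has `u' = φ (y r - r' - 1)`, so if
`y r - r' - 1` has constant sign on `[x, ∞)` and `r` stays bounded, then `u` is monotone there and
tends to `0`, which fixes the sign of `u(x)`.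
-/

open Real Set Filter MeasureTheory Topology ProbabilityTheory

def phi (t : ℝ) : ℝ := (1 / √(2 * π)) * exp (-t ^ 2 / 2)

lemma phi_eq_gaussianPDFReal : phi = gaussianPDFReal 0 1 := by
  ext t
  simp [phi, gaussianPDFReal]

lemma phi_pos (t : ℝ) : 0 < phi t :=
  phi_eq_gaussianPDFReal ▸ gaussianPDFReal_pos 0 1 t one_ne_zero

lemma integrable_phi : Integrable phi :=
  phi_eq_gaussianPDFReal ▸ integrable_gaussianPDFReal 0 1

lemma continuous_phi : Continuous phi := by
  unfold phi
  fun_prop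

lemma phi_neg (t : ℝ) : phi (-t) = phi t := by
  simp [phi]

lemma hasDerivAt_phi (t : ℝ) : HasDerivAt phi (-t * phi t) t := by
  have h : HasDerivAt (fun s : ℝ => -s ^ 2 / 2) (-t) t :=
    ((hasDerivAt_pow 2 t).neg.div_const 2).congr_deriv (by ring)
  exact (h.exp.const_mul (1 / √(2 * π))).congr_deriv (by unfold phi; ring)

lemma tendsto_phi_atTop : Tendsto phi atTop (𝓝 0) := by
  have h : Tendsto (fun t : ℝ => -t ^ 2 / 2) atTop atBot :=
    (tendsto_neg_atTop_atBot.comp (tendsto_pow_atTop two_ne_zero)).atBot_div_const two_pos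
  unfold phi
  simpa using (tendsto_exp_atBot.comp h).const_mul (1 / √(2 * π))

lemma sqrt_two_pi_mul_exp_mul_phi (t : ℝ) : √(2 * π) * exp (t ^ 2 / 2) * phi t = 1 := by
  have hs : √(2 * π) ≠ 0 := by positivity
  calc √(2 * π) * exp (t ^ 2 / 2) * phi t
      = √(2 * π) / √(2 * π) * (exp (t ^ 2 / 2) * exp (-t ^ 2 / 2)) := by unfold phi; ring
    _ = 1 := by rw [div_self hs, ← exp_add, neg_div, add_neg_cancel, exp_zero, one_mul]

lemma Phi_eq_cdf : Phi = cdf (gaussianReal 0 1) := by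
  ext x
  rw [cdf_eq_real, measureReal_def, gaussianReal_apply_eq_integral 0 one_ne_zero,
    ENNReal.toReal_ofReal (setIntegral_nonneg measurableSet_Iic
      fun t _ => gaussianPDFReal_nonneg 0 1 t), ← phi_eq_gaussianPDFReal]
  rfl

lemma Phi_le_one (x : ℝ) : Phi x ≤ 1 :=
  Phi_eq_cdf ▸ cdf_le_one _ x

lemma monotone_Phi : Monotone Phi :=
  Phi_eq_cdf ▸ monotone_cdf _

lemma tendsto_Phi_atTop : Tendsto Phi atTop (𝓝 1) :=
  Phi_eq_cdf ▸ tendsto_cdf_atTop _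

lemma integral_phi : ∫ t, phi t = 1 :=
  phi_eq_gaussianPDFReal ▸ integral_gaussianPDFReal_eq_one 0 one_ne_zero

lemma one_sub_Phi (x : ℝ) : 1 - Phi x = ∫ t in Ioi x, phi t := by
  rw [← integral_phi, ← intervalIntegral.integral_Iic_add_Ioi integrable_phi.integrableOn
    integrable_phi.integrableOn]
  exact add_sub_cancel_left (Phi x) _

lemma Phi_neg (x : ℝ) : Phi (-x) = 1 - Phi x :=
  calc Phi (-x) = ∫ t in Iic (-x), phi (-t) := by simp only [phi_neg]; rfl
    _ = ∫ t in Ioi x, phi t := by rw [integral_comp_neg_Iic, neg_neg]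
    _ = 1 - Phi x := (one_sub_Phi x).symm

lemma Phi_zero : Phi 0 = 1 / 2 := by
  have h := Phi_neg 0
  rw [neg_zero] at h
  linarith

lemma hasDerivAt_Phi (x : ℝ) : HasDerivAt Phi (phi x) x := by
  have h : Phi = fun y => Phi 0 + ∫ t in (0 : ℝ)..y, phi t := by
    ext y
    rw [← intervalIntegral.integral_Iic_sub_Iic integrable_phi.integrableOn
      integrable_phi.integrableOn]
    exact (add_sub_cancel (Phi 0) (Phi y)).symm
  rw [h]
  exact (intervalIntegral.integral_hasDerivAt_right integrable_phi.intervalIntegrable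
    continuous_phi.stronglyMeasurable.stronglyMeasurableAtFilter
    continuous_phi.continuousAt).const_add _

lemma nonneg_of_hasDerivAt_nonpos_of_tendsto_zero {u u' : ℝ → ℝ} {x : ℝ}
    (hu : ∀ y, x ≤ y → HasDerivAt u (u' y) y) (hu' : ∀ y, x ≤ y → u' y ≤ 0)
    (hlim : Tendsto u atTop (𝓝 0)) : 0 ≤ u x := by
  have hanti : AntitoneOn u (Ici x) := by
    refine antitoneOn_of_deriv_nonpos (convex_Ici x)
      (fun y hy => (hu y hy).continuousAt.continuousWithinAt) (fun y hy => ?_) (fun y hy => ?_)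
    all_goals rw [interior_Ici] at hy
    · exact (hu y hy.le).differentiableAt.differentiableWithinAt
    · exact (hu y hy.le).deriv ▸ hu' y hy.le
  exact le_of_tendsto hlim <| (eventually_ge_atTop x).mono fun y hy => hanti self_mem_Ici hy hy

section TailComparison

variable {r r' : ℝ → ℝ} {x C : ℝ}

lemma hasDerivAt_one_sub_Phi_sub_mul_phi {y : ℝ} (hr : HasDerivAt r (r' y) y) :
    HasDerivAt (fun y => 1 - Phi y - r y * phi y) (phi y * (y * r y - r' y - 1)) y :=
  (((hasDerivAt_Phi y).const_sub 1).sub (hr.mul (hasDerivAt_phi y))).congr_deriv (by ring)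

lemma tendsto_one_sub_Phi_sub_mul_phi (hbdd : ∀ᶠ y in atTop, |r y| ≤ C) :
    Tendsto (fun y => 1 - Phi y - r y * phi y) atTop (𝓝 0) := by
  have htail : Tendsto (fun y => 1 - Phi y) atTop (𝓝 0) := by
    simpa using tendsto_Phi_atTop.const_sub 1
  simpa using htail.sub (bdd_le_mul_tendsto_zero' C hbdd tendsto_phi_atTop)

lemma mul_phi_le_one_sub_Phi (hr : ∀ y, x ≤ y → HasDerivAt r (r' y) y)
    (hbdd : ∀ᶠ y in atTop, |r y| ≤ C) (hr' : ∀ y, x ≤ y → y * r y - r' y ≤ 1) :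
    r x * phi x ≤ 1 - Phi x := by
  have h := nonneg_of_hasDerivAt_nonpos_of_tendsto_zero
    (fun y hy => hasDerivAt_one_sub_Phi_sub_mul_phi (hr y hy))
    (fun y hy => mul_nonpos_of_nonneg_of_nonpos (phi_pos y).le (by linarith [hr' y hy]))
    (tendsto_one_sub_Phi_sub_mul_phi hbdd)
  linarith

lemma one_sub_Phi_le_mul_phi (hr : ∀ y, x ≤ y → HasDerivAt r (r' y) y)
    (hbdd : ∀ᶠ y in atTop, |r y| ≤ C) (hr' : ∀ y, x ≤ y → 1 ≤ y * r y - r' y) :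
    1 - Phi x ≤ r x * phi x := by
  have h : 0 ≤ -(1 - Phi x - r x * phi x) := nonneg_of_hasDerivAt_nonpos_of_tendsto_zero
    (u := fun y => -(1 - Phi y - r y * phi y))
    (fun y hy => (hasDerivAt_one_sub_Phi_sub_mul_phi (hr y hy)).neg)
    (fun y hy => neg_nonpos.2 (mul_nonneg (phi_pos y).le (by linarith [hr' y hy])))
    (by simpa only [neg_zero] using (tendsto_one_sub_Phi_sub_mul_phi hbdd).neg)
  linarith

end TailComparison

lemma hasDerivAt_one_add_sq (y : ℝ) : HasDerivAt (fun y : ℝ => 1 + y ^ 2) (2 * y) y := by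
  simpa using (hasDerivAt_pow 2 y).const_add 1

lemma div_one_add_sq_mul_phi_le_one_sub_Phi (x : ℝ) : x / (1 + x ^ 2) * phi x ≤ 1 - Phi x := by
  refine mul_phi_le_one_sub_Phi (r := fun y => y / (1 + y ^ 2))
    (r' := fun y => (1 - y ^ 2) / (1 + y ^ 2) ^ 2) (C := 1 / 2)
    (fun y _ => ?_) ((eventually_ge_atTop 0).mono fun y hy => ?_) (fun y _ => ?_)
  · exact ((hasDerivAt_id' y).div (hasDerivAt_one_add_sq y) (by positivity)).congr_deriv
      (by field_simp; ring)
  · rw [abs_of_nonneg (by positivity), div_le_iff₀ (by positivity)]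
    nlinarith [sq_nonneg (y - 1)]
  · have h : y * (y / (1 + y ^ 2)) - (1 - y ^ 2) / (1 + y ^ 2) ^ 2 = 1 - 2 / (1 + y ^ 2) ^ 2 := by
      field_simp
      ring
    linarith [show 0 < 2 / (1 + y ^ 2) ^ 2 by positivity]

lemma one_sub_Phi_le_mul_phi_of_neg_one_lt {x : ℝ} (hx : -1 < x) :
    1 - Phi x ≤ (x + 3 / (1 + x) ^ 3) / (1 + x ^ 2) * phi x := by
  refine one_sub_Phi_le_mul_phi (r := fun y => (y + 3 / (1 + y) ^ 3) / (1 + y ^ 2))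
    (r' := fun y =>
      (1 - 9 / (1 + y) ^ 4) / (1 + y ^ 2) - 2 * y * (y + 3 / (1 + y) ^ 3) / (1 + y ^ 2) ^ 2)
    (C := 4) (fun y hy => ?_) ((eventually_ge_atTop 0).mono fun y hy => ?_) (fun y hy => ?_)
  · have hy1 : 1 + y ≠ 0 := by linarith
    have hcube : HasDerivAt (fun y : ℝ => (1 + y) ^ 3) (3 * (1 + y) ^ 2) y :=
      (((hasDerivAt_id' y).const_add 1).fun_pow 3).congr_deriv (by norm_num)
    have hnum : HasDerivAt (fun y : ℝ => y + 3 / (1 + y) ^ 3) (1 - 9 / (1 + y) ^ 4) y :=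
      ((hasDerivAt_id' y).add ((hasDerivAt_const y 3).div hcube (pow_ne_zero 3 hy1))).congr_deriv
        (by field_simp; ring)
    exact (hnum.div (hasDerivAt_one_add_sq y) (by positivity)).congr_deriv (by field_simp)
  · have h3 : 3 / (1 + y) ^ 3 ≤ 3 := div_le_self (by norm_num) (one_le_pow₀ (by linarith))
    rw [abs_of_nonneg (by positivity), div_le_iff₀ (by positivity)]
    nlinarith [sq_nonneg (y - 1)]
  · have hy1 : 0 < 1 + y := by linarith
    have h : y * ((y + 3 / (1 + y) ^ 3) / (1 + y ^ 2)) - ((1 - 9 / (1 + y) ^ 4) / (1 + y ^ 2)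
        - 2 * y * (y + 3 / (1 + y) ^ 3) / (1 + y ^ 2) ^ 2)
        = 1 + (y ^ 4 - 5 * y ^ 3 + 6 * y ^ 2 + y + 7) / ((1 + y) ^ 4 * (1 + y ^ 2) ^ 2) := by
      field_simp
      ring
    have hR : 0 < y ^ 4 - 5 * y ^ 3 + 6 * y ^ 2 + y + 7 := by
      nlinarith [sq_nonneg (y ^ 2 - 5 / 2 * y - 1 / 8)]
    rw [h]
    linarith [show 0 ≤ (y ^ 4 - 5 * y ^ 3 + 6 * y ^ 2 + y + 7) / ((1 + y) ^ 4 * (1 + y ^ 2) ^ 2)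
      by positivity]

-- Since `√(2π) e^{x²/2} = 1 / φ x`, this is `(1 + x²)(1 - Φ x) / φ x - x`.
def millsExcess (x : ℝ) : ℝ := √(2 * π) * (1 + x ^ 2) * exp (x ^ 2 / 2) * (1 - Phi x) - x

lemma sqrt_two_pi_mul_exp_mul_div_mul_phi (x a : ℝ) :
    √(2 * π) * (1 + x ^ 2) * exp (x ^ 2 / 2) * (a / (1 + x ^ 2) * phi x) = a :=
  calc √(2 * π) * (1 + x ^ 2) * exp (x ^ 2 / 2) * (a / (1 + x ^ 2) * phi x)
      = a * (√(2 * π) * exp (x ^ 2 / 2) * phi x) * ((1 + x ^ 2) / (1 + x ^ 2)) := by ring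
    _ = a := by rw [sqrt_two_pi_mul_exp_mul_phi, div_self (by positivity), mul_one, mul_one]

lemma millsExcess_nonneg (x : ℝ) : 0 ≤ millsExcess x := by
  have h := mul_le_mul_of_nonneg_left (div_one_add_sq_mul_phi_le_one_sub_Phi x)
    (by positivity : 0 ≤ √(2 * π) * (1 + x ^ 2) * exp (x ^ 2 / 2))
  rw [sqrt_two_pi_mul_exp_mul_div_mul_phi] at h
  rw [millsExcess]
  linarith

lemma millsExcess_le {x : ℝ} (hx : -1 < x) : millsExcess x ≤ 3 / (1 + x) ^ 3 := by
  have h := mul_le_mul_of_nonneg_left (one_sub_Phi_le_mul_phi_of_neg_one_lt hx)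
    (by positivity : 0 ≤ √(2 * π) * (1 + x ^ 2) * exp (x ^ 2 / 2))
  rw [sqrt_two_pi_mul_exp_mul_div_mul_phi] at h
  rw [millsExcess]
  linarith

lemma gz_of_lt {z w : ℝ} (h : z < w) : gz z w = millsExcess w * Phi z := by
  rw [gz, if_pos h, millsExcess]

lemma gz_of_le {z w : ℝ} (h : w ≤ z) : gz z w = millsExcess (-w) * (1 - Phi z) := by
  rw [gz, if_neg h.not_gt, millsExcess, Phi_neg, neg_sq]
  ring

/-- For every `z > 0`: `g_z(w) ≤ 3/(2(1 - w)³)` for `w < 0`, and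
`g_z(w) ≤ 3/(1 + w)³` for `w > z`. -/
theorem gz_bounds (z : ℝ) (hz : 0 < z) :
    (∀ w : ℝ, w < 0 → gz z w ≤ 3 / (2 * (1 - w) ^ 3)) ∧
    (∀ w : ℝ, z < w → gz z w ≤ 3 / (1 + w) ^ 3) := by
  refine ⟨fun w hw => ?_, fun w hw => ?_⟩
  · have hΦ : 1 - Phi z ≤ 1 / 2 := by linarith [monotone_Phi hz.le, Phi_zero]
    have hw' : 0 < 1 - w := by linarith
    rw [gz_of_le (hw.le.trans hz.le)]
    calc millsExcess (-w) * (1 - Phi z) ≤ 3 / (1 - w) ^ 3 * (1 / 2) :=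
          mul_le_mul ((millsExcess_le (by linarith)).trans_eq (by rw [sub_eq_add_neg])) hΦ
            (by linarith [Phi_le_one z]) (by positivity)
      _ = 3 / (2 * (1 - w) ^ 3) := by field_simp
  · rw [gz_of_lt hw]
    calc millsExcess w * Phi z ≤ millsExcess w :=
          mul_le_of_le_one_right (millsExcess_nonneg w) (Phi_le_one z)
      _ ≤ 3 / (1 + w) ^ 3 := millsExcess_le (by linarith)
end
end

section
/- Let (x_1, …, x_N) be the unique strictly decreasing zero-mean solution of the MIW recursion and let P_N be its empirical distribution. Then the Wasserstein distance to the standard normal distribution satisfies d_W(P_N, γ) ≤ 16·√(log N)/N. -/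
open MeasureTheory

noncomputable section

/-- Partial sums `S_n = x_1 + ⋯ + x_n`. -/
def Ssum (x : ℕ → ℝ) (n : ℕ) : ℝ := ∑ i ∈ Finset.Icc 1 n, x i

/-- `x` is a solution of the MIW recursion
`x_{n+1} = x_n - 1/(x_1 + ⋯ + x_n)` for `1 ≤ n ≤ N - 1`. -/
def IsMIW (N : ℕ) (x : ℕ → ℝ) : Prop :=
  ∀ n, 1 ≤ n → n ≤ N - 1 → Ssum x n ≠ 0 ∧ x (n + 1) = x n - 1 / Ssum x n

/-- The empirical distribution `P_N(A) = #{n : x_n ∈ A} / N` of `x_1, …, x_N`. -/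
def empDist (N : ℕ) (x : ℕ → ℝ) : Measure ℝ :=
  (N : ENNReal)⁻¹ • ∑ n ∈ Finset.Icc 1 N, Measure.dirac (x n)

/-!
Stein's method along the MIW points. For a 1-Lipschitz `h` put `g = h - ∫ h dγ` and let `f` solve
`f' - w f = g`. The Mills-ratio bounds `w / (1 + w²) ≤ R(w)` and `w R(w) ≤ 1`, together with the
symmetry `w ↦ -w`, give `|f'| ≤ 2` and `Lip(f') ≤ 21/4`. Summation by parts with `S_N = 0` turns
`∑ x_n f(x_n)` into `∑_{n<N} S_n (f(x_n) - f(x_{n+1}))`, and since the recursion says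
`S_n (x_n - x_{n+1}) = 1`, each summand differs from `f'(x_n)` by a Taylor remainder of at most
`(21/8)(x_n - x_{n+1})`. These telescope, so `|∑ g(x_n)| ≤ 2 + (21/8)(x_1 - x_N)`. Finally
`x_1 ≤ 2 √(log N)`: while all earlier terms exceed `x_1 / 2` we have `S_n ≥ x_1 (n + 1) / 2`, so the
decrements `1 / S_n` add up to at most `(2 / x_1) log N`; reversing the sequence bounds `-x_N`.
-/

open ProbabilityTheory Real Set Filter Topology

local notation "φ" => gaussianPDFReal 0 1

/-! ### The standard Gaussian density -/

lemma gaussianPDFReal_zero_one (t : ℝ) : φ t = (√(2 * π))⁻¹ * rexp (-t ^ 2 / 2) := by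
  simp [gaussianPDFReal]

lemma gaussianPDFReal_zero_one_neg (t : ℝ) : φ (-t) = φ t := by
  simp only [gaussianPDFReal_zero_one, neg_sq]

lemma gaussianPDFReal_zero_one_abs (t : ℝ) : φ |t| = φ t := by
  simp only [gaussianPDFReal_zero_one, sq_abs]

lemma continuous_gaussianPDFReal_zero_one : Continuous φ := by
  simp only [funext gaussianPDFReal_zero_one]; fun_prop

lemma hasDerivAt_gaussianPDFReal_zero_one (t : ℝ) : HasDerivAt φ (-t * φ t) t := by
  have h := ((hasDerivAt_pow 2 t).fun_neg.div_const 2).exp.const_mul (√(2 * π))⁻¹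
  rw [show φ = fun s => (√(2 * π))⁻¹ * rexp (-s ^ 2 / 2) from
    funext gaussianPDFReal_zero_one]
  exact h.congr_deriv (by push_cast; ring)

lemma tendsto_gaussianPDFReal_zero_one_atTop : Tendsto φ atTop (𝓝 0) := by
  have : Tendsto (fun t : ℝ => -t ^ 2 / 2) atTop atBot :=
    (tendsto_neg_atTop_atBot.comp (tendsto_pow_atTop two_ne_zero)).atBot_div_const two_pos
  simpa [funext gaussianPDFReal_zero_one] using (tendsto_exp_atBot.comp this).const_mul _

lemma integrable_mul_gaussianPDFReal_zero_one : Integrable fun t => t * φ t := by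
  convert (integrable_mul_exp_neg_mul_sq (b := 1 / 2) (by norm_num)).const_mul (√(2 * π))⁻¹
    using 2 with t
  rw [gaussianPDFReal_zero_one]; ring_nf

lemma integrable_abs_mul_gaussianPDFReal_zero_one : Integrable fun t => |t| * φ t :=
  integrable_mul_gaussianPDFReal_zero_one.abs.congr (ae_of_all _ fun t => by
    simp only [abs_mul, abs_of_nonneg (gaussianPDFReal_nonneg 0 1 t)])

lemma integral_Ioi_mul_gaussianPDFReal_zero_one (w : ℝ) : ∫ t in Ioi w, t * φ t = φ w := by
  have := integral_Ioi_of_hasDerivAt_of_tendsto' (f := fun t => -φ t) (a := w) (m := 0)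
    (fun t _ => by simpa using (hasDerivAt_gaussianPDFReal_zero_one t).fun_neg)
    integrable_mul_gaussianPDFReal_zero_one.integrableOn
    (by simpa using tendsto_gaussianPDFReal_zero_one_atTop.neg)
  simpa using this

lemma integral_abs_mul_gaussianPDFReal_zero_one_le_one : ∫ t, |t| * φ t ≤ 1 := by
  have h : ∫ t, |t| * φ t = 2 * φ 0 := by
    simpa [gaussianPDFReal_zero_one_abs, integral_Ioi_mul_gaussianPDFReal_zero_one] using
      integral_comp_abs (f := fun t => t * φ t)
  have h0 : φ 0 = (√(2 * π))⁻¹ := by simp [gaussianPDFReal_zero_one]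
  rw [h, h0, ← div_eq_mul_inv, div_le_one (by positivity)]
  exact Real.le_sqrt_of_sq_le (by nlinarith [pi_gt_three])

lemma integral_gaussianReal_zero_one (g : ℝ → ℝ) :
    ∫ t, g t ∂gaussianReal 0 1 = ∫ t, g t * φ t := by
  simp only [integral_gaussianReal_eq_integral_smul one_ne_zero, smul_eq_mul, mul_comm]

lemma LipschitzWith.integrable_mul_gaussianPDFReal_zero_one {K : NNReal} {g : ℝ → ℝ}
    (hg : LipschitzWith K g) : Integrable fun t => g t * φ t := by
  refine Integrable.mono' (((integrable_gaussianPDFReal 0 1).const_mul |g 0|).add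
    (integrable_abs_mul_gaussianPDFReal_zero_one.const_mul K))
    ((hg.continuous.mul continuous_gaussianPDFReal_zero_one).aestronglyMeasurable)
    (ae_of_all _ fun t => ?_)
  have hφ := gaussianPDFReal_nonneg 0 1 t
  have hgt : |g t - g 0| ≤ K * |t| := by simpa [Real.dist_eq] using hg.dist_le_mul t 0
  rw [Pi.add_apply, Real.norm_eq_abs, abs_mul, abs_of_nonneg hφ]
  nlinarith [abs_sub_abs_le_abs_sub (g t) (g 0)]

lemma LipschitzWith.comp_neg {K : NNReal} {g : ℝ → ℝ} (hg : LipschitzWith K g) :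
    LipschitzWith K fun t => g (-t) :=
  LipschitzWith.of_dist_le_mul fun a b => by simpa [dist_neg_neg] using hg.dist_le_mul (-a) (-b)

lemma integral_comp_neg_gaussianReal (g : ℝ → ℝ) :
    ∫ t, g (-t) ∂gaussianReal 0 1 = ∫ t, g t ∂gaussianReal 0 1 := by
  simp only [integral_gaussianReal_zero_one]
  conv_lhs => enter [2, t]; rw [← gaussianPDFReal_zero_one_neg]
  exact integral_neg_eq_self (fun t => g t * φ t) volume

lemma hasDerivAt_integral_Ioi {f : ℝ → ℝ} (hf : Continuous f) (hfi : Integrable f) (w : ℝ) :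
    HasDerivAt (fun s => ∫ t in Ioi s, f t) (-f w) w := by
  have h : (fun s => ∫ t in Ioi s, f t) =
      fun s => (∫ t in Ioi 0, f t) - ∫ t in 0..s, f t := by
    funext s
    rw [← intervalIntegral.integral_Ioi_sub_Ioi' hfi.integrableOn hfi.integrableOn,
      sub_sub_cancel]
  rw [h]
  exact (intervalIntegral.integral_hasDerivAt_right hfi.intervalIntegrable
    (hf.stronglyMeasurableAtFilter _ _) hf.continuousAt).const_sub _

/-! ### Gaussian tail and Mills ratio -/

def gaussianTail (w : ℝ) : ℝ := ∫ t in Ioi w, φ t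

def millsRatio (w : ℝ) : ℝ := gaussianTail w / φ w

lemma hasDerivAt_millsRatio (w : ℝ) : HasDerivAt millsRatio (w * millsRatio w - 1) w := by
  have hφ := gaussianPDFReal_pos 0 1 w one_ne_zero
  have := (hasDerivAt_integral_Ioi continuous_gaussianPDFReal_zero_one
    (integrable_gaussianPDFReal 0 1) w).div (hasDerivAt_gaussianPDFReal_zero_one w) hφ.ne'
  refine this.congr_deriv ?_
  rw [millsRatio, gaussianTail]
  field_simp
  ring

lemma mul_gaussianTail_le (w : ℝ) : w * gaussianTail w ≤ φ w := by
  rw [gaussianTail, ← integral_const_mul, ← integral_Ioi_mul_gaussianPDFReal_zero_one w]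
  refine setIntegral_mono_on ((integrable_gaussianPDFReal 0 1).const_mul w).integrableOn
    integrable_mul_gaussianPDFReal_zero_one.integrableOn measurableSet_Ioi fun t ht => ?_
  exact mul_le_mul_of_nonneg_right (le_of_lt ht) (gaussianPDFReal_nonneg 0 1 t)

lemma mul_millsRatio_le_one (w : ℝ) : w * millsRatio w ≤ 1 := by
  have hφ := gaussianPDFReal_pos 0 1 w one_ne_zero
  rw [millsRatio, mul_div_assoc', div_le_one hφ]
  exact mul_gaussianTail_le w

lemma millsRatio_antitone : Antitone millsRatio :=
  antitone_of_deriv_nonpos (fun w => (hasDerivAt_millsRatio w).differentiableAt) fun w => by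
    rw [(hasDerivAt_millsRatio w).deriv]; linarith [mul_millsRatio_le_one w]


lemma millsRatio_zero : millsRatio 0 = √(2 * π) / 2 := by
  have h : ∫ t in Ioi 0, rexp (-t ^ 2 / 2) = √(2 * π) / 2 := by
    convert integral_gaussian_Ioi (1 / 2) using 3 with t
    · ring_nf
    · ring_nf
  simp only [millsRatio, gaussianTail, gaussianPDFReal_zero_one, integral_const_mul, h]
  field_simp
  simp

lemma mul_div_one_add_sq_le_gaussianTail (w : ℝ) : w * φ w / (1 + w ^ 2) ≤ gaussianTail w := by
  set F' : ℝ → ℝ := fun t => (t ^ 4 + 2 * t ^ 2 - 1) / (1 + t ^ 2) ^ 2 * φ t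
  have hF : ∀ t, HasDerivAt (fun s => -s * φ s / (1 + s ^ 2)) (F' t) t := fun t => by
    have h := ((hasDerivAt_neg t).fun_mul (hasDerivAt_gaussianPDFReal_zero_one t)).fun_div
      ((hasDerivAt_pow 2 t).const_add 1) (by positivity)
    refine h.congr_deriv ?_
    simp only [F']
    field_simp
    ring
  have hF'le : ∀ t, |F' t| ≤ φ t := fun t => by
    have hφ := gaussianPDFReal_nonneg 0 1 t
    rw [abs_mul, abs_of_nonneg hφ, abs_div, abs_of_pos (by positivity : (0:ℝ) < (1 + t ^ 2) ^ 2)]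
    refine mul_le_of_le_one_left hφ ((div_le_one (by positivity)).2 (abs_le.2 ⟨?_, ?_⟩)) <;>
      nlinarith [sq_nonneg t, sq_nonneg (t ^ 2)]
  have hF'int : Integrable F' := (integrable_gaussianPDFReal 0 1).mono'
    (by fun_prop) (ae_of_all _ hF'le)
  have hlim : Tendsto (fun s => -s * φ s / (1 + s ^ 2)) atTop (𝓝 0) := by
    refine squeeze_zero_norm (fun s => ?_) tendsto_gaussianPDFReal_zero_one_atTop
    have hφ := gaussianPDFReal_nonneg 0 1 s
    rw [norm_div, norm_mul, norm_neg, Real.norm_of_nonneg hφ, Real.norm_eq_abs,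
      Real.norm_of_nonneg (by positivity : (0 : ℝ) ≤ 1 + s ^ 2), div_le_iff₀ (by positivity)]
    nlinarith [sq_abs s, sq_nonneg (|s| - 1), abs_nonneg s]
  have h := integral_Ioi_of_hasDerivAt_of_tendsto' (a := w) (fun t _ => hF t)
    hF'int.integrableOn hlim
  calc w * φ w / (1 + w ^ 2) = ∫ t in Ioi w, F' t := by rw [h]; ring
    _ ≤ gaussianTail w := setIntegral_mono_on hF'int.integrableOn
        (integrable_gaussianPDFReal 0 1).integrableOn measurableSet_Ioi
        fun t _ => (le_abs_self _).trans (hF'le t)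

lemma div_one_add_sq_le_millsRatio (w : ℝ) : w / (1 + w ^ 2) ≤ millsRatio w := by
  have hφ := gaussianPDFReal_pos 0 1 w one_ne_zero
  rw [millsRatio, le_div_iff₀ hφ, div_mul_eq_mul_div]
  exact mul_div_one_add_sq_le_gaussianTail w

/-! ### The Stein solution -/

/-- For centred `g` this is the usual `e^{w²/2} ∫_{-∞}^w g φ`; written with the upper tail it
solves `f' = w f + g` for every integrable `g φ`. -/
def steinSolution (g : ℝ → ℝ) (w : ℝ) : ℝ := -(∫ t in Ioi w, g t * φ t) / φ w

lemma hasDerivAt_steinSolution {g : ℝ → ℝ} (hg : Continuous g)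
    (hgi : Integrable fun t => g t * φ t) (w : ℝ) :
    HasDerivAt (steinSolution g) (w * steinSolution g w + g w) w := by
  have hφ := gaussianPDFReal_pos 0 1 w one_ne_zero
  have := (hasDerivAt_integral_Ioi (f := fun t => g t * φ t)
    (hg.mul continuous_gaussianPDFReal_zero_one) hgi w).fun_neg.fun_div
    (hasDerivAt_gaussianPDFReal_zero_one w) hφ.ne'
  refine this.congr_deriv ?_
  rw [steinSolution]
  field_simp
  ring

section LipschitzStein

variable {g : ℝ → ℝ} (hg : LipschitzWith 1 g)
include hg

lemma abs_steinSolution_add_mul_millsRatio_le (w : ℝ) :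
    |steinSolution g w + g w * millsRatio w| ≤ 1 - w * millsRatio w := by
  have hφ := gaussianPDFReal_pos 0 1 w one_ne_zero
  have hgi := hg.integrable_mul_gaussianPDFReal_zero_one.integrableOn (s := Ioi w)
  have hφi := ((integrable_gaussianPDFReal 0 1).const_mul (g w)).integrableOn (s := Ioi w)
  have hti := (integrable_mul_gaussianPDFReal_zero_one.sub
    ((integrable_gaussianPDFReal 0 1).const_mul w)).integrableOn (s := Ioi w)
  set ρ := ∫ t in Ioi w, (g t * φ t - g w * φ t) with hρ_def
  have hsplit : ∫ t in Ioi w, g t * φ t = g w * gaussianTail w + ρ := by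
    rw [hρ_def, integral_sub hgi hφi, integral_const_mul, gaussianTail]; ring
  have hρ : |ρ| ≤ φ w - w * gaussianTail w := by
    calc |ρ| ≤ ∫ t in Ioi w, |g t * φ t - g w * φ t| := abs_integral_le_integral_abs
      _ ≤ ∫ t in Ioi w, (t * φ t - w * φ t) := by
          refine setIntegral_mono_on (hgi.sub hφi).abs hti measurableSet_Ioi fun t ht => ?_
          have hφt := gaussianPDFReal_nonneg 0 1 t
          have hgt : |g t - g w| ≤ t - w := by
            simpa [Real.dist_eq, abs_of_pos (sub_pos.2 (show w < t from ht))] using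
              hg.dist_le_mul t w
          rw [← sub_mul, ← sub_mul, abs_mul, abs_of_nonneg hφt]
          exact mul_le_mul_of_nonneg_right hgt hφt
      _ = φ w - w * gaussianTail w := by
          rw [integral_sub integrable_mul_gaussianPDFReal_zero_one.integrableOn
            ((integrable_gaussianPDFReal 0 1).const_mul w).integrableOn, integral_const_mul,
            integral_Ioi_mul_gaussianPDFReal_zero_one, gaussianTail]
  have hrepr : steinSolution g w + g w * millsRatio w = -ρ / φ w := by
    rw [steinSolution, hsplit, millsRatio]; field_simp; ring
  rw [hrepr, abs_div, abs_neg, abs_of_pos hφ, div_le_iff₀ hφ, millsRatio]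
  calc |ρ| ≤ φ w - w * gaussianTail w := hρ
    _ = (1 - w * (gaussianTail w / φ w)) * φ w := by field_simp

variable (hg0 : ∫ t, g t ∂gaussianReal 0 1 = 0)
include hg0

lemma abs_le_abs_add_one_of_integral_gaussianReal_eq_zero (w : ℝ) : |g w| ≤ |w| + 1 := by
  have hgi := hg.integrable_mul_gaussianPDFReal_zero_one
  have hφi := integrable_gaussianPDFReal 0 1
  have hrepr : ∫ t, (g w * φ t - g t * φ t) = g w := by
    rw [integral_sub (hφi.const_mul _) hgi, integral_const_mul,
      integral_gaussianPDFReal_eq_one 0 one_ne_zero, ← integral_gaussianReal_zero_one, hg0]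
    ring
  have hbound : ∀ t, |g w * φ t - g t * φ t| ≤ |w| * φ t + |t| * φ t := fun t => by
    have hφ := gaussianPDFReal_nonneg 0 1 t
    have hgt : |g w - g t| ≤ |w - t| := by simpa [Real.dist_eq] using hg.dist_le_mul w t
    rw [← sub_mul, ← add_mul, abs_mul, abs_of_nonneg hφ]
    exact mul_le_mul_of_nonneg_right (hgt.trans (abs_sub _ _)) hφ
  calc |g w| = |∫ t, (g w * φ t - g t * φ t)| := by rw [hrepr]
    _ ≤ ∫ t, |g w * φ t - g t * φ t| := abs_integral_le_integral_abs
    _ ≤ ∫ t, (|w| * φ t + |t| * φ t) :=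
        integral_mono ((hφi.const_mul _).sub hgi).abs
          ((hφi.const_mul _).add integrable_abs_mul_gaussianPDFReal_zero_one) hbound
    _ = |w| + ∫ t, |t| * φ t := by
        rw [integral_add (hφi.const_mul _) integrable_abs_mul_gaussianPDFReal_zero_one,
          integral_const_mul, integral_gaussianPDFReal_eq_one 0 one_ne_zero, mul_one]
    _ ≤ |w| + 1 := by linarith [integral_abs_mul_gaussianPDFReal_zero_one_le_one]

lemma abs_mul_steinSolution_add_le_two_of_nonneg {w : ℝ} (hw : 0 ≤ w) :
    |w * steinSolution g w + g w| ≤ 2 := by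
  have hr := abs_steinSolution_add_mul_millsRatio_le hg w
  have hgw := abs_le_abs_add_one_of_integral_gaussianReal_eq_zero hg hg0 w
  rw [abs_of_nonneg hw] at hgw
  have hR := mul_millsRatio_le_one w
  have hden : 0 < 1 + w ^ 2 := by positivity
  have hwR : w ≤ millsRatio w * (1 + w ^ 2) :=
    (div_le_iff₀ hden).1 (div_one_add_sq_le_millsRatio w)
  calc |w * steinSolution g w + g w|
      = |w * (steinSolution g w + g w * millsRatio w) + g w * (1 - w * millsRatio w)| := by ring_nf
    _ ≤ w * (1 - w * millsRatio w) + (w + 1) * (1 - w * millsRatio w) := by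
        refine (abs_add_le _ _).trans (add_le_add ?_ ?_) <;> rw [abs_mul]
        · rw [abs_of_nonneg hw]; exact mul_le_mul_of_nonneg_left hr hw
        · rw [abs_of_nonneg (sub_nonneg.2 hR)]
          exact mul_le_mul_of_nonneg_right hgw (sub_nonneg.2 hR)
    _ ≤ 2 := by
        nlinarith [mul_le_mul_of_nonneg_left hwR hw,
          mul_nonneg (add_nonneg (sq_nonneg (w - 1)) (sq_nonneg w)) (sub_nonneg.2 hR)]

-- `(1 + w²) f + w g` is the derivative of `w ↦ w f(w)`.
lemma abs_one_add_sq_mul_steinSolution_add_mul_le_of_nonneg {w : ℝ} (hw : 0 ≤ w) :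
    |(1 + w ^ 2) * steinSolution g w + w * g w| ≤ 17 / 4 := by
  have hr := abs_steinSolution_add_mul_millsRatio_le hg w
  have hgw := abs_le_abs_add_one_of_integral_gaussianReal_eq_zero hg hg0 w
  rw [abs_of_nonneg hw] at hgw
  have hR := mul_millsRatio_le_one w
  have hden : 0 < 1 + w ^ 2 := by positivity
  have hwR : w ≤ millsRatio w * (1 + w ^ 2) :=
    (div_le_iff₀ hden).1 (div_one_add_sq_le_millsRatio w)
  set R := millsRatio w
  have hu : 0 ≤ (1 + w ^ 2) * R - w := by linarith
  have hu_le : (w + 1) * ((1 + w ^ 2) * R - w) ≤ 13 / 4 := by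
    rcases le_total w 1 with hw1 | hw1
    · have hR0 : R ≤ 63 / 50 := by
        refine (millsRatio_antitone hw).trans ?_
        rw [millsRatio_zero, div_le_iff₀ two_pos]
        exact Real.sqrt_le_iff.2 ⟨by norm_num, by nlinarith [pi_lt_d2]⟩
      nlinarith [mul_le_mul_of_nonneg_left hR0 (mul_nonneg (by linarith : 0 ≤ w + 1) hden.le),
        mul_le_one₀ hw1 hw hw1, mul_le_one₀ (mul_le_one₀ hw1 hw hw1) hw hw1]
    · nlinarith [mul_le_mul_of_nonneg_left hR hden.le, mul_le_mul_of_nonneg_right hw1 hu]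
  calc |(1 + w ^ 2) * steinSolution g w + w * g w|
      = |(1 + w ^ 2) * (steinSolution g w + g w * R) - g w * ((1 + w ^ 2) * R - w)| := by
        ring_nf
    _ ≤ (1 + w ^ 2) * (1 - w * R) + (w + 1) * ((1 + w ^ 2) * R - w) := by
        refine (abs_sub _ _).trans (add_le_add ?_ ?_) <;> rw [abs_mul]
        · rw [abs_of_pos hden]; exact mul_le_mul_of_nonneg_left hr hden.le
        · rw [abs_of_nonneg hu]; exact mul_le_mul_of_nonneg_right hgw hu
    _ ≤ 1 + 13 / 4 := add_le_add (by nlinarith [mul_le_mul_of_nonneg_left hwR hw]) hu_le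
    _ = 17 / 4 := by norm_num

lemma steinSolution_comp_neg (w : ℝ) :
    steinSolution (fun t => g (-t)) w = -steinSolution g (-w) := by
  have hgi := hg.integrable_mul_gaussianPDFReal_zero_one
  have hrefl : ∫ t in Ioi w, g (-t) * φ t = ∫ t in Iic (-w), g t * φ t := by
    have h (t : ℝ) : g (-t) * φ t = g (-t) * φ (-t) := by rw [gaussianPDFReal_zero_one_neg]
    simp only [h]
    exact integral_comp_neg_Ioi w fun t => g t * φ t
  have htotal : (∫ t in Iic (-w), g t * φ t) + ∫ t in Ioi (-w), g t * φ t = 0 := by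
    rw [intervalIntegral.integral_Iic_add_Ioi hgi.integrableOn hgi.integrableOn,
      ← integral_gaussianReal_zero_one, hg0]
  rw [steinSolution, steinSolution, hrefl, gaussianPDFReal_zero_one_neg,
    eq_neg_of_add_eq_zero_left htotal]
  ring

lemma abs_mul_steinSolution_add_le_two (w : ℝ) : |w * steinSolution g w + g w| ≤ 2 := by
  rcases le_total 0 w with hw | hw
  · exact abs_mul_steinSolution_add_le_two_of_nonneg hg hg0 hw
  · have := abs_mul_steinSolution_add_le_two_of_nonneg hg.comp_neg
      ((integral_comp_neg_gaussianReal g).trans hg0) (neg_nonneg.2 hw)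
    rwa [steinSolution_comp_neg hg hg0, neg_neg, neg_mul_neg] at this

lemma abs_one_add_sq_mul_steinSolution_add_mul_le (w : ℝ) :
    |(1 + w ^ 2) * steinSolution g w + w * g w| ≤ 17 / 4 := by
  rcases le_total 0 w with hw | hw
  · exact abs_one_add_sq_mul_steinSolution_add_mul_le_of_nonneg hg hg0 hw
  · have := abs_one_add_sq_mul_steinSolution_add_mul_le_of_nonneg hg.comp_neg
      ((integral_comp_neg_gaussianReal g).trans hg0) (neg_nonneg.2 hw)
    rwa [steinSolution_comp_neg hg hg0, neg_neg, neg_sq, neg_mul, mul_neg, ← neg_add,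
      abs_neg] at this

lemma lipschitzWith_mul_steinSolution_add :
    LipschitzWith (21 / 4) fun w => w * steinSolution g w + g w := by
  have hG (w : ℝ) : HasDerivAt (fun v => v * steinSolution g v)
      ((1 + w ^ 2) * steinSolution g w + w * g w) w :=
    ((hasDerivAt_id w).mul (hasDerivAt_steinSolution hg.continuous
      hg.integrable_mul_gaussianPDFReal_zero_one w)).congr_deriv (by simp only [id]; ring)
  have hGlip : LipschitzWith (17 / 4) fun v => v * steinSolution g v :=
    lipschitzWith_of_nnnorm_deriv_le (fun w => (hG w).differentiableAt) fun w => by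
      rw [(hG w).deriv, ← NNReal.coe_le_coe, coe_nnnorm, Real.norm_eq_abs]
      exact_mod_cast abs_one_add_sq_mul_steinSolution_add_mul_le hg hg0 w
  rw [show (21 / 4 : NNReal) = 17 / 4 + 1 by norm_num]
  exact hGlip.add hg

end LipschitzStein

lemma abs_sub_sub_mul_le_of_lipschitzWith {f f' : ℝ → ℝ} {K : NNReal}
    (hf : ∀ t, HasDerivAt f (f' t) t) (hf' : LipschitzWith K f') {u v : ℝ} (hvu : v ≤ u) :
    |f u - f v - f' u * (u - v)| ≤ K / 2 * (u - v) ^ 2 := by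
  have hint : IntervalIntegrable f' volume v u := hf'.continuous.intervalIntegrable v u
  have hrepr : f u - f v - f' u * (u - v) = ∫ t in v..u, (f' t - f' u) := by
    rw [intervalIntegral.integral_sub hint intervalIntegrable_const,
      intervalIntegral.integral_eq_sub_of_hasDerivAt (fun t _ => hf t) hint,
      intervalIntegral.integral_const, smul_eq_mul, mul_comm]
  have hbound : ∀ᵐ t ∂volume.restrict (uIoc v u), ‖f' t - f' u‖ ≤ K * (u - t) := by
    rw [uIoc_of_le hvu]
    filter_upwards [ae_restrict_mem measurableSet_Ioc] with t ht
    simpa [Real.dist_eq, abs_of_nonpos (sub_nonpos.2 ht.2)] using hf'.dist_le_mul t u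
  have hval : ∫ t in v..u, (K : ℝ) * (u - t) = K / 2 * (u - v) ^ 2 := by
    simp only [intervalIntegral.integral_const_mul, intervalIntegral.integral_sub
      intervalIntegrable_const intervalIntegral.intervalIntegrable_id, integral_id,
      intervalIntegral.integral_const, smul_eq_mul]
    ring
  have hpos : 0 ≤ ∫ t in v..u, (K : ℝ) * (u - t) := by rw [hval]; positivity
  rw [hrepr, ← Real.norm_eq_abs, ← hval, ← abs_of_nonneg hpos]
  exact intervalIntegral.norm_integral_le_abs_of_norm_le hbound
    ((continuous_const.mul (continuous_const.sub continuous_id)).intervalIntegrable v u)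

/-! ### MIW sequences -/

lemma Ssum_succ (x : ℕ → ℝ) (n : ℕ) : Ssum x (n + 1) = Ssum x n + x (n + 1) :=
  Finset.sum_Icc_succ_top (by omega) x

lemma sum_Icc_by_parts (x c : ℕ → ℝ) (m : ℕ) :
    ∑ n ∈ Finset.Icc 1 (m + 1), x n * c n
      = Ssum x (m + 1) * c (m + 1) + ∑ n ∈ Finset.Icc 1 m, Ssum x n * (c n - c (n + 1)) := by
  induction m with
  | zero => simp [Ssum]
  | succ m ih =>
    rw [Finset.sum_Icc_succ_top (by omega), ih, Finset.sum_Icc_succ_top (by omega),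
      Ssum_succ x (m + 1)]
    ring

lemma sum_Icc_inv_add_one_le_log (n : ℕ) :
    ∑ i ∈ Finset.Icc 1 n, 1 / ((i : ℝ) + 1) ≤ Real.log (n + 1) := by
  induction n with
  | zero => simp
  | succ n ih =>
    have h := Real.log_le_sub_one_of_pos (x := (n + 1) / (n + 1 + 1)) (by positivity)
    rw [Real.log_div (by positivity) (by positivity)] at h
    have hstep : ((n : ℝ) + 1) / (n + 1 + 1) - 1 = -(1 / (n + 1 + 1)) := by field_simp; ring
    rw [Finset.sum_Icc_succ_top (by omega)]
    push_cast
    linarith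

lemma IsMIW.sub_succ_eq {N : ℕ} {x : ℕ → ℝ} (hx : IsMIW N x) {n : ℕ} (h1 : 1 ≤ n)
    (hn : n ≤ N - 1) : x n - x (n + 1) = 1 / Ssum x n := by
  rw [(hx n h1 hn).2]; ring

lemma IsMIW.eq_sub_sum {N : ℕ} {x : ℕ → ℝ} (hx : IsMIW N x) {m : ℕ} (hm : m ≤ N - 1) :
    x (m + 1) = x 1 - ∑ i ∈ Finset.Icc 1 m, 1 / Ssum x i := by
  induction m with
  | zero => simp
  | succ m ih =>
    rw [Finset.sum_Icc_succ_top (by omega), ← hx.sub_succ_eq (by omega) hm, ih (by omega)]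
    ring

lemma mul_add_one_div_two_le_Ssum {x : ℕ → ℝ} {i : ℕ} (hi : 1 ≤ i)
    (hx : ∀ j ∈ Finset.Icc 1 i, x 1 / 2 ≤ x j) : x 1 * (i + 1) / 2 ≤ Ssum x i := by
  have h := Finset.single_le_sum (f := fun j => x j - x 1 / 2)
    (fun j hj => sub_nonneg.2 (hx j hj)) (Finset.mem_Icc.2 ⟨le_rfl, hi⟩)
  rw [Finset.sum_sub_distrib, Finset.sum_const, Nat.card_Icc, nsmul_eq_mul] at h
  rw [Ssum]
  push_cast at h
  linarith

structure IsDecreasingZeroMeanMIW (N : ℕ) (x : ℕ → ℝ) : Prop where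
  two_le : 2 ≤ N
  isMIW : IsMIW N x
  succ_lt : ∀ n, 1 ≤ n → n < N → x (n + 1) < x n
  sum_eq_zero : ∑ i ∈ Finset.Icc 1 N, x i = 0

namespace IsDecreasingZeroMeanMIW

variable {N : ℕ} {x : ℕ → ℝ} (hx : IsDecreasingZeroMeanMIW N x)
include hx

lemma Ssum_pos {n : ℕ} (h1 : 1 ≤ n) (hn : n ≤ N - 1) : 0 < Ssum x n := by
  have := hx.succ_lt n h1 (by omega)
  rw [← sub_pos, hx.isMIW.sub_succ_eq h1 hn] at this
  exact one_div_pos.1 this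

lemma half_le_succ {n : ℕ} (h1 : 1 ≤ n) (hn : n ≤ N - 1)
    (hlog : 2 / x 1 * Real.log N < x 1 / 2) (hhalf : ∀ i ∈ Finset.Icc 1 n, x 1 / 2 ≤ x i) :
    x 1 / 2 ≤ x (n + 1) := by
  have ha : 0 < x 1 := by simpa [Ssum] using hx.Ssum_pos le_rfl (by omega)
  have hS : ∀ i ∈ Finset.Icc 1 n, 1 / Ssum x i ≤ 2 / x 1 * (1 / ((i : ℝ) + 1)) := by
    intro i hi
    obtain ⟨hi1, hin⟩ := Finset.mem_Icc.1 hi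
    have hSi := mul_add_one_div_two_le_Ssum hi1 fun j hj =>
      hhalf j (Finset.Icc_subset_Icc le_rfl hin hj)
    calc 1 / Ssum x i ≤ 1 / (x 1 * (i + 1) / 2) := one_div_le_one_div_of_le (by positivity) hSi
      _ = 2 / x 1 * (1 / ((i : ℝ) + 1)) := by field_simp
  have hlogn : Real.log (n + 1) ≤ Real.log N :=
    Real.log_le_log (by positivity) (by exact_mod_cast (by omega : n + 1 ≤ N))
  calc x 1 / 2 ≤ x 1 - 2 / x 1 * Real.log N := by linarith
    _ ≤ x 1 - 2 / x 1 * ∑ i ∈ Finset.Icc 1 n, 1 / ((i : ℝ) + 1) := by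
        gcongr
        exact (sum_Icc_inv_add_one_le_log n).trans hlogn
    _ ≤ x 1 - ∑ i ∈ Finset.Icc 1 n, 1 / Ssum x i := by
        rw [Finset.mul_sum]; exact sub_le_sub_left (Finset.sum_le_sum hS) _
    _ = x (n + 1) := (hx.isMIW.eq_sub_sum hn).symm

lemma le_two_mul_sqrt_log : x 1 ≤ 2 * √(Real.log N) := by
  have hN := hx.two_le
  have ha : 0 < x 1 := by simpa [Ssum] using hx.Ssum_pos le_rfl (by omega)
  have hxN : x N < 0 := by
    have h := Ssum_succ x (N - 1)
    rw [Nat.sub_add_cancel (by omega)] at h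
    linarith [hx.Ssum_pos (n := N - 1) (by omega) le_rfl, show Ssum x N = 0 from hx.sum_eq_zero]
  -- Otherwise every `x n` stays above `x 1 / 2`, contradicting `x N < 0`.
  by_contra! hlt
  have hlog : 2 / x 1 * Real.log N < x 1 / 2 := by
    have hL := Real.sq_sqrt (Real.log_nonneg (x := N) (by exact_mod_cast (by omega : 1 ≤ N)))
    rw [div_mul_eq_mul_div, div_lt_div_iff₀ ha two_pos]
    nlinarith [Real.sqrt_nonneg (Real.log N)]
  have hhalf : ∀ n, n ≤ N → ∀ i ∈ Finset.Icc 1 n, x 1 / 2 ≤ x i := by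
    intro n
    induction n with
    | zero => simp
    | succ n ih =>
      intro hn i hi
      obtain ⟨hi1, hin⟩ := Finset.mem_Icc.1 hi
      rcases Nat.lt_or_ge i (n + 1) with h | h
      · exact ih (by omega) i (Finset.mem_Icc.2 ⟨hi1, by omega⟩)
      obtain rfl : i = n + 1 := by omega
      rcases Nat.eq_zero_or_pos n with rfl | hn1
      · linarith
      exact hx.half_le_succ hn1 (by omega) hlog (ih (by omega))
  linarith [hhalf N le_rfl N (Finset.mem_Icc.2 ⟨by omega, le_rfl⟩)]

lemma Ssum_reverse {n : ℕ} (hn : n ≤ N) :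
    Ssum (fun i => -x (N + 1 - i)) n = Ssum x (N - n) := by
  induction n with
  | zero => simpa [Ssum] using hx.sum_eq_zero.symm
  | succ n ih =>
    have h := Ssum_succ x (N - (n + 1))
    rw [show N - (n + 1) + 1 = N - n by omega] at h
    rw [Ssum_succ, ih (by omega), show N + 1 - (n + 1) = N - n by omega]
    linarith

lemma reverse : IsDecreasingZeroMeanMIW N fun i => -x (N + 1 - i) where
  two_le := hx.two_le
  isMIW n h1 hn := by
    have hS := hx.Ssum_reverse (n := n) (by omega)
    obtain ⟨hne, heq⟩ := hx.isMIW (N - n) (by omega) (by omega)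
    refine ⟨hS ▸ hne, ?_⟩
    rw [hS]
    beta_reduce
    rw [show N + 1 - (n + 1) = N - n by omega, show N + 1 - n = N - n + 1 by omega, heq]
    ring
  succ_lt n h1 hn := by
    rw [show N + 1 - (n + 1) = N - n by omega, show N + 1 - n = N - n + 1 by omega]
    linarith [hx.succ_lt (N - n) (by omega) (by omega)]
  sum_eq_zero := by simpa [Ssum] using hx.Ssum_reverse le_rfl

lemma neg_le_two_mul_sqrt_log : -x N ≤ 2 * √(Real.log N) := by
  simpa using hx.reverse.le_two_mul_sqrt_log

lemma abs_sum_deriv_sub_mul_le {f f' : ℝ → ℝ} {K : NNReal}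
    (hf : ∀ t, HasDerivAt f (f' t) t) (hf' : LipschitzWith K f') :
    |∑ n ∈ Finset.Icc 1 N, (f' (x n) - x n * f (x n))| ≤ |f' (x N)| + K / 2 * (x 1 - x N) := by
  have hN := hx.two_le
  obtain ⟨M, rfl⟩ : ∃ M, N = M + 1 := ⟨N - 1, by omega⟩
  have hM : 1 ≤ M := by omega
  have hterm : ∀ n ∈ Finset.Icc 1 M, |f' (x n) - Ssum x n * (f (x n) - f (x (n + 1)))|
      ≤ K / 2 * (x n - x (n + 1)) := by
    intro n hn
    obtain ⟨h1, hnM⟩ := Finset.mem_Icc.1 hn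
    have hS := hx.Ssum_pos h1 (by omega)
    have hSd : Ssum x n * (x n - x (n + 1)) = 1 := by
      rw [hx.isMIW.sub_succ_eq h1 (by omega)]; field_simp
    calc |f' (x n) - Ssum x n * (f (x n) - f (x (n + 1)))|
        = |Ssum x n * (f (x n) - f (x (n + 1)) - f' (x n) * (x n - x (n + 1)))| := by
          rw [← abs_neg]; congr 1; linear_combination f' (x n) * hSd
      _ ≤ Ssum x n * (K / 2 * (x n - x (n + 1)) ^ 2) := by
          rw [abs_mul, abs_of_pos hS]
          exact mul_le_mul_of_nonneg_left (abs_sub_sub_mul_le_of_lipschitzWith hf hf'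
            (hx.succ_lt n h1 (by omega)).le) hS.le
      _ = K / 2 * (x n - x (n + 1)) := by linear_combination K / 2 * (x n - x (n + 1)) * hSd
  have hsplit : ∑ n ∈ Finset.Icc 1 (M + 1), (f' (x n) - x n * f (x n))
      = f' (x (M + 1)) +
        ∑ n ∈ Finset.Icc 1 M, (f' (x n) - Ssum x n * (f (x n) - f (x (n + 1)))) := by
    rw [Finset.sum_sub_distrib, sum_Icc_by_parts x (fun n => f (x n)),
      show Ssum x (M + 1) = 0 from hx.sum_eq_zero, Finset.sum_Icc_succ_top (by omega),
      Finset.sum_sub_distrib]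
    ring
  have htel : ∑ n ∈ Finset.Icc 1 M, (x n - x (n + 1)) = x 1 - x (M + 1) := by
    rw [← neg_sub, ← Finset.sum_Icc_sub hM x, ← Finset.sum_neg_distrib]
    simp only [neg_sub]
  calc |∑ n ∈ Finset.Icc 1 (M + 1), (f' (x n) - x n * f (x n))|
      ≤ |f' (x (M + 1))| +
        ∑ n ∈ Finset.Icc 1 M, |f' (x n) - Ssum x n * (f (x n) - f (x (n + 1)))| := by
        rw [hsplit]
        exact (abs_add_le _ _).trans (by gcongr; exact Finset.abs_sum_le_sum_abs _ _)
    _ ≤ |f' (x (M + 1))| + ∑ n ∈ Finset.Icc 1 M, K / 2 * (x n - x (n + 1)) := by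
        gcongr with n hn; exact hterm n hn
    _ = |f' (x (M + 1))| + K / 2 * (x 1 - x (M + 1)) := by rw [← Finset.mul_sum, htel]

end IsDecreasingZeroMeanMIW

lemma integral_empDist (N : ℕ) (x : ℕ → ℝ) (g : ℝ → ℝ) :
    ∫ w, g w ∂(empDist N x) = (N : ℝ)⁻¹ * ∑ n ∈ Finset.Icc 1 N, g (x n) := by
  rw [empDist, integral_smul_measure,
    integral_finsetSum_measure fun n _ => integrable_dirac (by simp)]
  simp [integral_dirac]

lemma LipschitzWith.integral_sub_integral_gaussianReal {K : NNReal} {h : ℝ → ℝ}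
    (hh : LipschitzWith K h) :
    ∫ w, (h w - ∫ t, h t ∂gaussianReal 0 1) ∂gaussianReal 0 1 = 0 := by
  have hφi := integrable_gaussianPDFReal 0 1
  simp only [integral_gaussianReal_zero_one, sub_mul]
  rw [integral_sub hh.integrable_mul_gaussianPDFReal_zero_one (hφi.const_mul _),
    integral_const_mul, integral_gaussianPDFReal_eq_one 0 one_ne_zero, mul_one, sub_self]

/-- Upper bound on the Wasserstein distance: for the unique strictly decreasing zero-mean
solution of the MIW recursion,
`d_W(P_N, γ) = sup_{h 1-Lipschitz} |∫ h dP_N - ∫ h dγ| ≤ 16 √(log N) / N`. -/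
theorem wasserstein_upper_bound (N : ℕ) (hN : 2 ≤ N) (x : ℕ → ℝ)
    (hMIW : IsMIW N x) (hdec : ∀ n, 1 ≤ n → n < N → x (n + 1) < x n)
    (hmean : ∑ i ∈ Finset.Icc 1 N, x i = 0) :
    ∀ h : ℝ → ℝ, LipschitzWith 1 h →
      |(∫ w, h w ∂(empDist N x)) - ∫ w, h w ∂(ProbabilityTheory.gaussianReal 0 1)| ≤
        16 * Real.sqrt (Real.log N) / N := by
  intro h hh
  have hx : IsDecreasingZeroMeanMIW N x := ⟨hN, hMIW, hdec, hmean⟩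
  set μ := ∫ w, h w ∂gaussianReal 0 1
  set g : ℝ → ℝ := fun w => h w - μ
  have hg : LipschitzWith 1 g := by simpa using hh.sub (LipschitzWith.const μ)
  have hg0 : ∫ w, g w ∂gaussianReal 0 1 = 0 := hh.integral_sub_integral_gaussianReal
  have hsum := hx.abs_sum_deriv_sub_mul_le
    (hasDerivAt_steinSolution hg.continuous hg.integrable_mul_gaussianPDFReal_zero_one)
    (lipschitzWith_mul_steinSolution_add hg hg0)
  simp only [add_sub_cancel_left] at hsum
  have hf'N := abs_mul_steinSolution_add_le_two hg hg0 (x N)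
  have hx1 := hx.le_two_mul_sqrt_log
  have hxN := hx.neg_le_two_mul_sqrt_log
  have hlog : 4 / 11 ≤ √(Real.log N) := Real.le_sqrt_of_sq_le (by
    have := Real.log_le_log two_pos (by exact_mod_cast hN : (2 : ℝ) ≤ N)
    linarith [Real.log_two_gt_d9])
  have hNpos : (0 : ℝ) < N := by positivity
  have hdiff :
      (∫ w, h w ∂empDist N x) - μ = (N : ℝ)⁻¹ * ∑ n ∈ Finset.Icc 1 N, g (x n) := by
    rw [integral_empDist, Finset.sum_sub_distrib, Finset.sum_const, Nat.card_Icc,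
      Nat.add_sub_cancel, nsmul_eq_mul]
    field_simp
  rw [hdiff, abs_mul, abs_inv, abs_of_pos hNpos, inv_mul_le_iff₀ hNpos,
    mul_div_cancel₀ _ hNpos.ne']
  push_cast at hsum
  linarith
end
end
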